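/- Let n, r be positive integers with n > 2r, let 0 ≤ α < 1, and suppose there exist n unit vectors in ℝ^r with all pairwise inner products at most α. Then n − 2r ≤ (27/8)((1 + αn)³ − 1); in particular, n ≤ 2r + (27/8)((1 + αn)³ − 1). -/

import Mathlib

/-!
Let `G` be the Gram matrix of the code and `A = G - 1`, so `tr A = 0`, the entries of `A` are at
most `α`, and put `s = α n`. For every real `t` the matrix `(A - t) G (A - t)` is positive
semidefinite, whence `0 ≤ tr A³ + (1 - 2t) tr A² + t² n`. As `G` has rank at most `r`,
`tr A² = tr G² - n ≥ n² / r - n`, and the choice `t = (n - r) / r` gives `tr A³ ≥ 2 (n - 2r)`.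

Conversely, split `A = P - N` into positive and negative parts. Then
`tr A³ ≤ tr P³ + 3 tr (P N²) ≤ s³ + 3 α ‖N 𝟙‖²`. The row sums of `N` are bounded by those of
`G`, namely `(N 𝟙)ₖ ≤ 1 + s - (G 𝟙)ₖ`, and `‖G 𝟙‖² ≤ λ_max(G) ⟪𝟙, G 𝟙⟫` with
`λ_max(G) ≤ 2 + 2s`; together `‖N 𝟙‖² ≤ n (1 + s)²`, so `tr A³ ≤ s³ + 3 s (1 + s)²`.
-/

open Matrix Finset
open scoped InnerProductSpace

namespace Matrix

variable {ι : Type*} [Fintype ι]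

theorem sq_trace_le_card_mul_trace_mul_self {C : Matrix ι ι ℝ} (hC : C.IsSymm) :
    C.trace ^ 2 ≤ Fintype.card ι * (C * C).trace := by
  have hdiag : ∑ i, C i i ^ 2 ≤ (C * C).trace := by
    refine sum_le_sum fun i _ => ?_
    rw [diag_apply, mul_apply, sq]
    exact single_le_sum (f := fun j => C i j * C j i)
      (fun j _ => by simpa only [hC.apply i j] using mul_self_nonneg (C i j)) (mem_univ i)
  calc C.trace ^ 2 ≤ Fintype.card ι * ∑ i, C i i ^ 2 := sq_sum_le_card_mul_sum_sq
    _ ≤ Fintype.card ι * (C * C).trace := by gcongr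

theorem sq_trace_gram_le_finrank_mul {E : Type*} [NormedAddCommGroup E] [InnerProductSpace ℝ E]
    [FiniteDimensional ℝ E] (v : ι → E) :
    (gram ℝ v).trace ^ 2 ≤ Module.finrank ℝ E * (gram ℝ v * gram ℝ v).trace := by
  set M : Matrix (Fin (Module.finrank ℝ E)) ι ℝ :=
    of fun i j => (stdOrthonormalBasis ℝ E).repr (v j) i
  have hG : gram ℝ v = Mᵀ * M := by
    simpa only [conjTranspose_eq_transpose_of_trivial] using
      gram_eq_conjTranspose_mul (stdOrthonormalBasis ℝ E) v
  calc (gram ℝ v).trace ^ 2 = (M * Mᵀ).trace ^ 2 := by rw [hG, trace_mul_comm]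
    _ ≤ Fintype.card (Fin _) * (M * Mᵀ * (M * Mᵀ)).trace :=
      sq_trace_le_card_mul_trace_mul_self (by simp [IsSymm, transpose_mul])
    _ = Module.finrank ℝ E * (gram ℝ v * gram ℝ v).trace := by
      rw [Fintype.card_fin, hG, Matrix.mul_assoc M, trace_mul_comm M]
      simp only [Matrix.mul_assoc]

theorem trace_mul_mul_nonneg {X Y Z : Matrix ι ι ℝ} (hX : ∀ i j, 0 ≤ X i j)
    (hY : ∀ i j, 0 ≤ Y i j) (hZ : ∀ i j, 0 ≤ Z i j) : 0 ≤ (X * Y * Z).trace :=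
  sum_nonneg fun i _ => sum_nonneg fun k _ =>
    mul_nonneg (sum_nonneg fun j _ => mul_nonneg (hX i j) (hY j k)) (hZ k i)

theorem trace_cube_le_posPart_negPart (A : Matrix ι ι ℝ) :
    (A * A * A).trace ≤ (A.map (·⁺) * A.map (·⁺) * A.map (·⁺)).trace
      + 3 * (A.map (·⁺) * A.map (·⁻) * A.map (·⁻)).trace := by
  set P := A.map (·⁺)
  set N := A.map (·⁻)
  have hA : A = P - N := by ext i j; simp [P, N, posPart_sub_negPart]
  have hP : ∀ i j, 0 ≤ P i j := fun i j => posPart_nonneg _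
  have hN : ∀ i j, 0 ≤ N i j := fun i j => negPart_nonneg _
  have hexpand : (A * A * A).trace = (P * P * P).trace - 3 * (P * P * N).trace
      + 3 * (P * N * N).trace - (N * N * N).trace := by
    rw [hA]
    simp only [sub_mul, mul_sub, trace_sub]
    rw [trace_mul_cycle P N P, ← trace_mul_cycle P P N, trace_mul_cycle N P N,
      trace_mul_cycle N N P]
    ring
  linarith [trace_mul_mul_nonneg hP hP hN, trace_mul_mul_nonneg hN hN hN]

theorem trace_cube_le_of_nonneg_of_le {P : Matrix ι ι ℝ} {α : ℝ} (hP0 : ∀ i j, 0 ≤ P i j)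
    (hPα : ∀ i j, P i j ≤ α) : (P * P * P).trace ≤ (α * Fintype.card ι) ^ 3 := by
  calc (P * P * P).trace = ∑ i, ∑ k, (∑ j, P i j * P j k) * P k i := rfl
    _ ≤ ∑ _i : ι, ∑ _k : ι, (∑ _j : ι, α * α) * α :=
      sum_le_sum fun i _ => sum_le_sum fun k _ =>
        have hα : 0 ≤ α := (hP0 i k).trans (hPα i k)
        mul_le_mul (sum_le_sum fun j _ => mul_le_mul (hPα i j) (hPα j k) (hP0 j k) hα)
          (hPα k i) (hP0 k i) (sum_nonneg fun _ _ => mul_nonneg hα hα)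
    _ = (α * Fintype.card ι) ^ 3 := by simp only [sum_const, card_univ, nsmul_eq_mul]; ring

theorem trace_mul_mul_le_mul_sum_sq {P N : Matrix ι ι ℝ} {α : ℝ} (hP : ∀ i j, P i j ≤ α)
    (hN0 : ∀ i j, 0 ≤ N i j) (hN : N.IsSymm) :
    (P * N * N).trace ≤ α * ∑ k, (∑ j, N k j) ^ 2 := by
  have hNN : ∀ i j, 0 ≤ (N * N) i j := fun i j =>
    sum_nonneg fun k _ => mul_nonneg (hN0 i k) (hN0 k j)
  calc (P * N * N).trace = ∑ i, ∑ j, P i j * (N * N) j i := by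
        rw [Matrix.mul_assoc]; rfl
    _ ≤ ∑ i, ∑ j, α * (N * N) j i :=
      sum_le_sum fun i _ => sum_le_sum fun j _ => mul_le_mul_of_nonneg_right (hP i j) (hNN j i)
    _ = α * ∑ i, ∑ j, ∑ k, N k j * N k i := by simp only [← mul_sum, mul_apply, hN.apply]
    _ = α * ∑ k, ∑ j, ∑ i, N k j * N k i := by
      rw [(sum_congr rfl fun _ _ => sum_comm).trans
        (sum_comm.trans (sum_congr rfl fun _ _ => sum_comm))]
    _ = α * ∑ k, (∑ j, N k j) ^ 2 := by simp only [sq, sum_mul_sum]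

theorem nonneg_trace_cube_add_of_posSemidef_add_one [DecidableEq ι] {A : Matrix ι ι ℝ}
    (hA : (A + 1).PosSemidef) (htr : A.trace = 0) (t : ℝ) :
    0 ≤ (A * A * A).trace + (1 - 2 * t) * (A * A).trace + t ^ 2 * Fintype.card ι := by
  have hAt : A.IsSymm := by simpa using hA.isHermitian.sub isHermitian_one
  have hsymm : (A - t • 1)ᴴ = A - t • 1 := by simp [hAt.eq]
  have hexpand : (A - t • 1) * (A + 1) * (A - t • 1)
      = A * A * A + (1 - 2 * t) • (A * A) + (t ^ 2 - 2 * t) • A + t ^ 2 • (1 : Matrix ι ι ℝ) := by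
    simp only [sub_mul, mul_sub, add_mul, mul_add, smul_mul_assoc, mul_smul_comm, one_mul,
      mul_one, sub_smul, one_smul]
    module
  have := (hA.conjTranspose_mul_mul_same (A - t • 1)).trace_nonneg
  rwa [hsymm, hexpand, trace_add, trace_add, trace_add, trace_smul, trace_smul, trace_smul,
    htr, trace_one, smul_eq_mul, smul_eq_mul, mul_zero, add_zero] at this

end Matrix

theorem two_mul_sub_le_of_forall_nonneg {n r T S : ℝ} (hr : 0 ≤ r) (hn : 2 * r < n)
    (hT : n ^ 2 ≤ r * (T + n)) (hS : ∀ t, 0 ≤ S + (1 - 2 * t) * T + t ^ 2 * n) :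
    2 * (n - 2 * r) ≤ S := by
  have hr : 0 < r := hr.lt_of_ne fun h => by nlinarith [h ▸ hT]
  set t := (n - r) / r
  have ht : t * r = n - r := div_mul_cancel₀ _ hr.ne'
  have htT : n * t ≤ T := by nlinarith
  have ht1 : 1 ≤ t := by nlinarith
  have hSt : n * t * (t - 1) ≤ S := by
    nlinarith [hS t, mul_le_mul_of_nonneg_left htT (by linarith : 0 ≤ 2 * t - 1)]
  have hnt : 2 * r ≤ n * t := le_of_mul_le_mul_right (by nlinarith) hr
  nlinarith [mul_le_mul_of_nonneg_right hnt (sub_nonneg.mpr ht1)]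

section SphericalCode

variable {ι E : Type*} [NormedAddCommGroup E] [InnerProductSpace ℝ E] {v : ι → E} {α : ℝ}

theorem gram_sub_one_apply_le [DecidableEq ι] (hunit : ∀ i, ‖v i‖ = 1)
    (hpair : ∀ i j, i ≠ j → ⟪v i, v j⟫_ℝ ≤ α) (hα : 0 ≤ α) (i j : ι) :
    (gram ℝ v - 1) i j ≤ α := by
  rcases eq_or_ne i j with rfl | hij
  · simp [hunit, hα]
  · simpa [one_apply_ne hij] using hpair i j hij

variable [Fintype ι]

theorem norm_sum_smul_sq (x : ι → ℝ) (v : ι → E) :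
    ‖∑ i, x i • v i‖ ^ 2 = ∑ i, ∑ j, x i * x j * ⟪v i, v j⟫_ℝ := by
  rw [← real_inner_self_eq_norm_sq, sum_inner]
  refine sum_congr rfl fun i _ => ?_
  rw [real_inner_smul_left, inner_sum, mul_sum]
  refine sum_congr rfl fun j _ => ?_
  rw [real_inner_smul_right, mul_assoc]

/-- Adding the nonnegative form at `|x|` makes every coefficient `x i * x j + |x i| * |x j|`
nonnegative, so that `⟪v i, v j⟫ ≤ α` can be used termwise. -/
theorem norm_sum_smul_sq_le (hunit : ∀ i, ‖v i‖ = 1)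
    (hpair : ∀ i j, i ≠ j → ⟪v i, v j⟫_ℝ ≤ α) (hα : 0 ≤ α) (x : ι → ℝ) :
    ‖∑ i, x i • v i‖ ^ 2 ≤ (2 + 2 * (α * Fintype.card ι)) * ∑ i, x i ^ 2 := by
  classical
  have hterm : ∀ i j, (x i * x j + |x i| * |x j|) * ⟪v i, v j⟫_ℝ
      ≤ 2 * α * (|x i| * |x j|) + if i = j then 2 * x i ^ 2 else 0 := by
    intro i j
    rcases eq_or_ne i j with rfl | hij
    · rw [real_inner_self_eq_norm_sq, hunit, if_pos rfl, ← sq, ← sq, sq_abs]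
      nlinarith [sq_nonneg (x i)]
    · have hlow : -(|x i| * |x j|) ≤ x i * x j := by rw [← abs_mul]; exact neg_abs_le _
      have hup : x i * x j ≤ |x i| * |x j| := by rw [← abs_mul]; exact le_abs_self _
      rw [if_neg hij, add_zero]
      nlinarith [mul_le_mul_of_nonneg_left (hpair i j hij) (neg_le_iff_add_nonneg.mp hlow)]
  have hCS : (∑ i, |x i|) ^ 2 ≤ Fintype.card ι * ∑ i, x i ^ 2 := by
    simpa only [sq_abs, card_univ] using sq_sum_le_card_mul_sum_sq (s := univ) (f := fun i => |x i|)
  calc ‖∑ i, x i • v i‖ ^ 2 ≤ ‖∑ i, x i • v i‖ ^ 2 + ‖∑ i, |x i| • v i‖ ^ 2 :=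
        le_add_of_nonneg_right (sq_nonneg _)
    _ = ∑ i, ∑ j, (x i * x j + |x i| * |x j|) * ⟪v i, v j⟫_ℝ := by
        simp only [norm_sum_smul_sq, ← sum_add_distrib, add_mul]
    _ ≤ ∑ i, ∑ j, (2 * α * (|x i| * |x j|) + if i = j then 2 * x i ^ 2 else 0) := by
        gcongr with i _ j _
        exact hterm i j
    _ = 2 * α * (∑ i, |x i|) ^ 2 + 2 * ∑ i, x i ^ 2 := by
        simp only [sum_add_distrib, sum_ite_eq, mem_univ, if_true, ← mul_sum, sq, sum_mul_sum]
    _ ≤ (2 + 2 * (α * Fintype.card ι)) * ∑ i, x i ^ 2 := by nlinarith [hCS]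

/-- The synthesis map `x ↦ ∑ x i • v i` and the analysis map `w ↦ (⟪v i, w⟫)ᵢ` are adjoint, so
they have the same norm. -/
theorem sum_inner_sq_le_of_norm_sum_smul_sq_le {c : ℝ} (hc : 0 ≤ c)
    (h : ∀ x : ι → ℝ, ‖∑ i, x i • v i‖ ^ 2 ≤ c * ∑ i, x i ^ 2) (w : E) :
    ∑ i, ⟪v i, w⟫_ℝ ^ 2 ≤ c * ‖w‖ ^ 2 := by
  set S := ∑ i, ⟪v i, w⟫_ℝ ^ 2
  set u := ∑ i, ⟪v i, w⟫_ℝ • v i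
  have hS : S = ⟪u, w⟫_ℝ := by simp only [S, u, sum_inner, real_inner_smul_left, sq]
  have hSuw : S ≤ ‖u‖ * ‖w‖ := hS ▸ real_inner_le_norm u w
  have hS0 : 0 ≤ S := by positivity
  have hsq : S ^ 2 ≤ c * S * ‖w‖ ^ 2 := by
    calc S ^ 2 ≤ ‖u‖ ^ 2 * ‖w‖ ^ 2 := by rw [← mul_pow]; gcongr
      _ ≤ c * S * ‖w‖ ^ 2 := by gcongr; exact h _
  rcases hS0.eq_or_lt with h0 | h0
  · rw [← h0]; positivity
  · nlinarith

variable [DecidableEq ι]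

theorem sum_negPart_gram_sub_one_le (hunit : ∀ i, ‖v i‖ = 1)
    (hpair : ∀ i j, i ≠ j → ⟪v i, v j⟫_ℝ ≤ α) (hα : 0 ≤ α) (k : ι) :
    ∑ j, ((gram ℝ v - 1) k j)⁻ ≤ 1 + α * Fintype.card ι - ⟪v k, ∑ j, v j⟫_ℝ := by
  have hpos : ∑ j, ((gram ℝ v - 1) k j)⁺ ≤ α * Fintype.card ι :=
    calc ∑ j, ((gram ℝ v - 1) k j)⁺ ≤ ∑ _j : ι, α :=
          sum_le_sum fun j _ => max_le (gram_sub_one_apply_le hunit hpair hα k j) hα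
      _ = α * Fintype.card ι := by simp [mul_comm]
  have hrow : ∑ j, (gram ℝ v - 1) k j = ⟪v k, ∑ j, v j⟫_ℝ - 1 := by
    simp [Matrix.sub_apply, sum_sub_distrib, inner_sum, one_apply]
  have hsplit : ∑ j, (gram ℝ v - 1) k j
      = ∑ j, ((gram ℝ v - 1) k j)⁺ - ∑ j, ((gram ℝ v - 1) k j)⁻ := by
    simp only [← sum_sub_distrib, posPart_sub_negPart]
  linarith

theorem sum_sq_sum_negPart_gram_sub_one_le (hunit : ∀ i, ‖v i‖ = 1)
    (hpair : ∀ i j, i ≠ j → ⟪v i, v j⟫_ℝ ≤ α) (hα : 0 ≤ α) :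
    ∑ k, (∑ j, ((gram ℝ v - 1) k j)⁻) ^ 2 ≤ Fintype.card ι * (1 + α * Fintype.card ι) ^ 2 := by
  set n : ℝ := (Fintype.card ι : ℝ)
  set w := ∑ j, v j
  have hs : 0 ≤ α * n := by positivity
  have hbessel : ∑ k, ⟪v k, w⟫_ℝ ^ 2 ≤ (2 + 2 * (α * n)) * ‖w‖ ^ 2 :=
    sum_inner_sq_le_of_norm_sum_smul_sq_le (by positivity) (norm_sum_smul_sq_le hunit hpair hα) w
  have hsum : ∑ k, ⟪v k, w⟫_ℝ = ‖w‖ ^ 2 := by rw [← sum_inner, real_inner_self_eq_norm_sq]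
  calc ∑ k, (∑ j, ((gram ℝ v - 1) k j)⁻) ^ 2 ≤ ∑ k, (1 + α * n - ⟪v k, w⟫_ℝ) ^ 2 :=
        sum_le_sum fun k _ => pow_le_pow_left₀ (sum_nonneg fun j _ => negPart_nonneg _)
          (sum_negPart_gram_sub_one_le hunit hpair hα k) 2
    _ = n * (1 + α * n) ^ 2 - 2 * (1 + α * n) * ∑ k, ⟪v k, w⟫_ℝ + ∑ k, ⟪v k, w⟫_ℝ ^ 2 := by
        simp only [sub_sq, sum_add_distrib, sum_sub_distrib, ← mul_sum, sum_const, card_univ,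
          nsmul_eq_mul, n]
    _ ≤ n * (1 + α * n) ^ 2 := by rw [hsum]; nlinarith

theorem trace_cube_gram_sub_one_le (hunit : ∀ i, ‖v i‖ = 1)
    (hpair : ∀ i j, i ≠ j → ⟪v i, v j⟫_ℝ ≤ α) (hα : 0 ≤ α) :
    ((gram ℝ v - 1) * (gram ℝ v - 1) * (gram ℝ v - 1)).trace
      ≤ (α * Fintype.card ι) ^ 3 + 3 * (α * Fintype.card ι) * (1 + α * Fintype.card ι) ^ 2 := by
  set A := gram ℝ v - 1
  have hA : A.IsSymm := by simpa using (isHermitian_gram ℝ v).sub isHermitian_one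
  have hP : ∀ i j, A.map (·⁺) i j ≤ α := fun i j =>
    max_le (gram_sub_one_apply_le hunit hpair hα i j) hα
  calc (A * A * A).trace
      ≤ (A.map (·⁺) * A.map (·⁺) * A.map (·⁺)).trace
        + 3 * (A.map (·⁺) * A.map (·⁻) * A.map (·⁻)).trace := trace_cube_le_posPart_negPart A
    _ ≤ (α * Fintype.card ι) ^ 3 + 3 * (α * ∑ k, (∑ j, (A k j)⁻) ^ 2) := by
        gcongr
        · exact trace_cube_le_of_nonneg_of_le (fun _ _ => posPart_nonneg _) hP
        · exact trace_mul_mul_le_mul_sum_sq hP (fun _ _ => negPart_nonneg _) (hA.map _)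
    _ ≤ (α * Fintype.card ι) ^ 3 + 3 * (α * (Fintype.card ι * (1 + α * Fintype.card ι) ^ 2)) := by
        gcongr
        exact sum_sq_sum_negPart_gram_sub_one_le hunit hpair hα
    _ = _ := by ring

end SphericalCode

theorem spherical_code_size_bound_general (n r : ℕ) (hn : 2 * r < n)
    (α : ℝ) (hα0 : 0 ≤ α)
    (v : Fin n → EuclideanSpace ℝ (Fin r))
    (hunit : ∀ i, ‖v i‖ = 1)
    (hpair : ∀ i j, i ≠ j → (inner ℝ (v i) (v j) : ℝ) ≤ α) :
    (n : ℝ) - 2 * r ≤ 27 / 8 * ((1 + α * n) ^ 3 - 1) := by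
  set A := gram ℝ v - 1
  have hG : gram ℝ v = A + 1 := (sub_add_cancel _ _).symm
  have htrG : (gram ℝ v).trace = n := by simp [trace, hunit]
  have htrA : A.trace = 0 := by simp [A, trace_sub, htrG]
  have htrG2 : (gram ℝ v * gram ℝ v).trace = (A * A).trace + n := by
    simp only [hG, add_mul, mul_add, mul_one, one_mul, trace_add, htrA, trace_one,
      Fintype.card_fin, add_zero, zero_add]
  have hrank : (n : ℝ) ^ 2 ≤ r * ((A * A).trace + n) := by
    simpa only [finrank_euclideanSpace_fin, htrG, htrG2] using sq_trace_gram_le_finrank_mul v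
  have hlower := two_mul_sub_le_of_forall_nonneg (Nat.cast_nonneg r) (by exact_mod_cast hn) hrank
    (by simpa using nonneg_trace_cube_add_of_posSemidef_add_one (hG ▸ posSemidef_gram ℝ v) htrA)
  have hupper := trace_cube_gram_sub_one_le hunit hpair hα0
  rw [Fintype.card_fin] at hupper
  have hs : 0 ≤ α * n := by positivity
  nlinarith [pow_nonneg hs 3, sq_nonneg (α * n)]

theorem spherical_code_size_bound (n r : ℕ) (hr : 0 < r) (hn : 2 * r < n)
    (α : ℝ) (hα0 : 0 ≤ α) (hα1 : α < 1)
    (v : Fin n → EuclideanSpace ℝ (Fin r))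
    (hunit : ∀ i, ‖v i‖ = 1)
    (hpair : ∀ i j, i ≠ j → (inner ℝ (v i) (v j) : ℝ) ≤ α) :
    (n : ℝ) - 2 * r ≤ 27 / 8 * ((1 + α * n) ^ 3 - 1) :=
  spherical_code_size_bound_general n r hn α hα0 v hunit hpair
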